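/- arXiv:1409.3071 — 6 statements merged into one kernel-verified Lean document; each statement's English description precedes it below -/
import Mathlib

section
/- Let q ≥ 1 and let a_1,…,a_q, b_1,…,b_q be positive reals such that for each i = 1,…,q the elementary symmetric polynomial inequality e_i(b_1,…,b_q) ≥ e_i(a_1,…,a_q) holds. Then for every natural number n, the ratio f_{n+1}/f_n ≤ 1, where f_n = ∏_{i=1}^q (a_i)_n / (b_i)_n and (a)_n denotes the rising factorial. In particular f_n ≤ f_1 for all n ≥ 1. -/
open Finset Real MeasureTheory

noncomputable def rise (a : ℝ) (n : ℕ) : ℝ := ∏ k ∈ Finset.range n, (a + k)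

noncomputable def esym {q : ℕ} (k : ℕ) (a : Fin q → ℝ) : ℝ :=
  ∑ s ∈ Finset.powersetCard k (Finset.univ : Finset (Fin q)), ∏ i ∈ s, a i

/-!
The ratio `f (n + 1) / f n` is `∏ i, (a i + n) / ∏ i, (b i + n)`. Expanding both products in
powers of `n`, the coefficients are the elementary symmetric polynomials of `a` and of `b`, so
the hypothesis compares them coefficient by coefficient and the numerator is at most the
denominator.
-/

lemma rise_succ (a : ℝ) (n : ℕ) : rise a (n + 1) = rise a n * (a + n) :=
  prod_range_succ _ _

lemma rise_pos {a : ℝ} (ha : 0 < a) (n : ℕ) : 0 < rise a n :=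
  prod_pos fun k _ => by positivity

lemma prod_rise_succ {ι : Type*} (s : Finset ι) (a : ι → ℝ) (n : ℕ) :
    ∏ i ∈ s, rise (a i) (n + 1) = (∏ i ∈ s, rise (a i) n) * ∏ i ∈ s, (a i + n) := by
  simp only [rise_succ, prod_mul_distrib]

@[simp]
lemma esym_zero {q : ℕ} (a : Fin q → ℝ) : esym 0 a = 1 := by
  simp [esym]

lemma prod_add_eq_sum_esym {q : ℕ} (a : Fin q → ℝ) (c : ℝ) :
    ∏ i, (a i + c) = ∑ k ∈ range (q + 1), esym k a * c ^ (q - k) := by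
  rw [prod_add, sum_powerset]
  simp only [card_univ, Fintype.card_fin]
  refine sum_congr rfl fun k _ => ?_
  rw [esym, sum_mul]
  refine sum_congr rfl fun t ht => ?_
  rw [mem_powersetCard] at ht
  rw [prod_const, card_sdiff_of_subset ht.1, card_univ, Fintype.card_fin, ht.2]

lemma prod_add_le_prod_add_of_esym_le {q : ℕ} {a b : Fin q → ℝ}
    (he : ∀ k : ℕ, 1 ≤ k → k ≤ q → esym k a ≤ esym k b) {c : ℝ} (hc : 0 ≤ c) :
    ∏ i, (a i + c) ≤ ∏ i, (b i + c) := by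
  rw [prod_add_eq_sum_esym, prod_add_eq_sum_esym]
  refine sum_le_sum fun k hk => ?_
  rcases Nat.eq_zero_or_pos k with rfl | hk0
  · simp
  · exact mul_le_mul_of_nonneg_right (he k hk0 (Nat.lt_succ_iff.mp (mem_range.mp hk)))
      (pow_nonneg hc _)

theorem stmt0_general (q : ℕ) (a b : Fin q → ℝ)
    (ha : ∀ i, 0 < a i) (hb : ∀ i, 0 < b i)
    (he : ∀ i : ℕ, 1 ≤ i → i ≤ q → esym i a ≤ esym i b)
    (f : ℕ → ℝ)
    (hf : ∀ n, f n = (∏ i, rise (a i) n) / (∏ i, rise (b i) n)) :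
    (∀ n : ℕ, f (n + 1) / f n ≤ 1) ∧ (∀ n : ℕ, 1 ≤ n → f n ≤ f 1) := by
  have hpos : ∀ n, 0 < f n := fun n => by
    rw [hf n]
    exact div_pos (prod_pos fun i _ => rise_pos (ha i) n) (prod_pos fun i _ => rise_pos (hb i) n)
  have hsucc : ∀ n : ℕ,
      f (n + 1) = f n * ((∏ i, (a i + n)) / ∏ i, (b i + n)) := fun n => by
    rw [hf, hf, prod_rise_succ, prod_rise_succ, mul_div_mul_comm]
  have hratio : ∀ n : ℕ, (∏ i, (a i + n)) / ∏ i, (b i + n) ≤ 1 := fun n =>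
    div_le_one_of_le₀ (prod_add_le_prod_add_of_esym_le he n.cast_nonneg)
      (prod_nonneg fun i _ => by have := hb i; positivity)
  have hanti : Antitone f := antitone_nat_of_succ_le fun n => by
    rw [hsucc]
    exact mul_le_of_le_one_right (hpos n).le (hratio n)
  refine ⟨fun n => ?_, fun n hn => hanti hn⟩
  rw [hsucc, mul_div_cancel_left₀ _ (hpos n).ne']
  exact hratio n

theorem stmt0 (q : ℕ) (hq : 1 ≤ q) (a b : Fin q → ℝ)
    (ha : ∀ i, 0 < a i) (hb : ∀ i, 0 < b i)
    (he : ∀ i : ℕ, 1 ≤ i → i ≤ q → esym i a ≤ esym i b)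
    (f : ℕ → ℝ)
    (hf : ∀ n, f n = (∏ i, rise (a i) n) / (∏ i, rise (b i) n)) :
    (∀ n : ℕ, f (n + 1) / f n ≤ 1) ∧ (∀ n : ℕ, 1 ≤ n → f n ≤ f 1) :=
  stmt0_general q a b ha hb he f hf
end

section
/- Let q ≥ 1 and let a_1,…,a_q, b_1,…,b_q be positive reals such that e_i(b) ≥ e_i(a) for each i = 1,…,q (each elementary symmetric polynomial in the b's dominates the corresponding one in the a's). Then for all x ≥ 0, the generalized hypergeometric function qFq(a;b;x) = ∑_{n≥0} (∏_i (a_i)_n / (b_i)_n) x^n/n! satisfies qFq(a;b;x) ≤ 1 - f_1 + f_1 e^x, where f_1 = ∏_{i=1}^q a_i/b_i. -/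
open Finset Real MeasureTheory

lemma prod_add_le {q : ℕ} (a b : Fin q → ℝ) (ha : ∀ i, 0 ≤ a i)
    (he : ∀ i : ℕ, 1 ≤ i → i ≤ q → esym i a ≤ esym i b)
    (t : ℝ) (ht : 0 ≤ t) :
    ∏ i, (a i + t) ≤ ∏ i, (b i + t) := by
  have key : ∀ c : Fin q → ℝ, ∏ i, (c i + t) =
      ∑ j ∈ Finset.range (q + 1), esym j c * t ^ (q - j) := by
    intro c
    rw [Finset.prod_add c (fun _ => t) Finset.univ, Finset.sum_powerset]
    rw [Finset.card_univ, Fintype.card_fin]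
    refine Finset.sum_congr rfl fun j hj => ?_
    rw [esym, Finset.sum_mul]
    refine Finset.sum_congr rfl fun s hs => ?_
    rw [Finset.mem_powersetCard] at hs
    rw [Finset.prod_const, Finset.card_sdiff_of_subset hs.1, Finset.card_univ, Fintype.card_fin, hs.2]
  rw [key a, key b]
  refine Finset.sum_le_sum fun j hj => ?_
  rcases Nat.eq_zero_or_pos j with h0 | h1
  · subst h0
    simp [esym, Finset.powersetCard_zero]
  · have hjq : j ≤ q := by
      rw [Finset.mem_range] at hj; omega
    exact mul_le_mul_of_nonneg_right (he j h1 hjq) (pow_nonneg ht _)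

set_option maxHeartbeats 1600000 in
theorem stmt1 (q : ℕ) (hq : 1 ≤ q) (a b : Fin q → ℝ)
    (ha : ∀ i, 0 < a i) (hb : ∀ i, 0 < b i)
    (he : ∀ i : ℕ, 1 ≤ i → i ≤ q → esym i a ≤ esym i b)
    (x : ℝ) (hx : 0 ≤ x) :
    (∑' n : ℕ, (∏ i, rise (a i) n) / (∏ i, rise (b i) n) * x ^ n / (Nat.factorial n))
      ≤ 1 - (∏ i, a i / b i) + (∏ i, a i / b i) * Real.exp x := by
  set f : ℕ → ℝ := fun n => (∏ i, rise (a i) n) / (∏ i, rise (b i) n) with hf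
  have hfpos : ∀ n, 0 < f n := fun n =>
    div_pos (Finset.prod_pos fun i _ => rise_pos (ha i) n)
      (Finset.prod_pos fun i _ => rise_pos (hb i) n)
  have hf0 : f 0 = 1 := by simp [hf, rise]
  have hf1 : f 1 = ∏ i, a i / b i := by
    simp [hf, rise, Finset.prod_div_distrib]
  have hstep : ∀ n, f (n + 1) ≤ f n := by
    intro n
    have hA : ∀ c : Fin q → ℝ, ∏ i, rise (c i) (n + 1) =
        (∏ i, rise (c i) n) * ∏ i, (c i + n) := by
      intro c
      rw [← Finset.prod_mul_distrib]
      exact Finset.prod_congr rfl fun i _ => Finset.prod_range_succ _ _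
    have hle : ∏ i, ((a i) + (n : ℝ)) ≤ ∏ i, ((b i) + (n : ℝ)) :=
      prod_add_le a b (fun i => (ha i).le) he n (Nat.cast_nonneg n)
    have hpa : 0 < ∏ i, ((a i) + (n : ℝ)) :=
      Finset.prod_pos fun i _ => by have := ha i; positivity
    have hpb : (0 : ℝ) < ∏ i, ((b i) + (n : ℝ)) :=
      Finset.prod_pos fun i _ => by have := hb i; positivity
    have hPa : 0 < ∏ i, rise (a i) n := Finset.prod_pos fun i _ => rise_pos (ha i) n
    have hPb : 0 < ∏ i, rise (b i) n := Finset.prod_pos fun i _ => rise_pos (hb i) n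
    simp only [hf, hA]
    rw [mul_div_mul_comm]
    calc (∏ i, rise (a i) n) / (∏ i, rise (b i) n) * ((∏ i, ((a i) + (n : ℝ))) / ∏ i, ((b i) + (n : ℝ)))
        ≤ (∏ i, rise (a i) n) / (∏ i, rise (b i) n) * 1 := by
          apply mul_le_mul_of_nonneg_left _ (by positivity)
          rw [div_le_one hpb]
          exact hle
      _ = (∏ i, rise (a i) n) / (∏ i, rise (b i) n) := mul_one _
  have hmono : ∀ n, 1 ≤ n → f n ≤ f 1 := by
    intro n hn
    induction n with
    | zero => omega
    | succ m ih =>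
      rcases Nat.eq_zero_or_pos m with h0 | h1
      · subst h0; exact le_refl _
      · exact (hstep m).trans (ih h1)
  have hfle1 : ∀ n, f n ≤ 1 := by
    intro n
    induction n with
    | zero => rw [hf0]
    | succ m ih => exact (hstep m).trans ih
  -- summability
  have hsum_exp : Summable fun n : ℕ => x ^ n / (Nat.factorial n : ℝ) := by
    simpa using Real.summable_pow_div_factorial x
  have hterm_nonneg : ∀ n, 0 ≤ f n * x ^ n / (Nat.factorial n : ℝ) := by
    intro n
    have := (hfpos n).le
    positivity
  have hterm_le : ∀ n, f n * x ^ n / (Nat.factorial n : ℝ) ≤ x ^ n / (Nat.factorial n : ℝ) := by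
    intro n
    apply div_le_div_of_nonneg_right ?_ (by positivity)
    · calc f n * x ^ n ≤ 1 * x ^ n :=
        mul_le_mul_of_nonneg_right (hfle1 n) (pow_nonneg hx n)
      _ = x ^ n := one_mul _
  have hsum : Summable fun n : ℕ => f n * x ^ n / (Nat.factorial n : ℝ) :=
    Summable.of_nonneg_of_le hterm_nonneg hterm_le hsum_exp
  -- exp as tsum
  have hexp : Real.exp x = ∑' n : ℕ, x ^ n / (Nat.factorial n : ℝ) := by
    rw [Real.exp_eq_exp_ℝ, NormedSpace.exp_eq_tsum_div]
  -- split off n = 0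
  rw [Summable.tsum_eq_zero_add hsum]
  have h0 : f 0 * x ^ 0 / (Nat.factorial 0 : ℝ) = 1 := by simp [hf0]
  rw [h0]
  have htail_sum : Summable fun n : ℕ => f (n + 1) * x ^ (n + 1) / (Nat.factorial (n + 1) : ℝ) :=
    (summable_nat_add_iff 1).mpr hsum
  have htail_exp : Summable fun n : ℕ => x ^ (n + 1) / (Nat.factorial (n + 1) : ℝ) :=
    (summable_nat_add_iff 1).mpr hsum_exp
  have hmaj : Summable fun n : ℕ =>
      (∏ i, a i / b i) * (x ^ (n + 1) / (Nat.factorial (n + 1) : ℝ)) :=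
    htail_exp.mul_left _
  have htail_le : (∑' n : ℕ, f (n + 1) * x ^ (n + 1) / (Nat.factorial (n + 1) : ℝ)) ≤
      ∑' n : ℕ, (∏ i, a i / b i) * (x ^ (n + 1) / (Nat.factorial (n + 1) : ℝ)) := by
    apply Summable.tsum_le_tsum _ htail_sum hmaj
    intro n
    rw [mul_div_assoc]
    apply mul_le_mul_of_nonneg_right (hf1 ▸ hmono (n + 1) (by omega)) (by positivity)
  have hexp_tail : (∑' n : ℕ, x ^ (n + 1) / (Nat.factorial (n + 1) : ℝ)) = Real.exp x - 1 := by
    have := Summable.tsum_eq_zero_add hsum_exp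
    rw [← hexp] at this
    simp only [pow_zero, Nat.factorial_zero, Nat.cast_one, div_one] at this
    linarith
  calc 1 + ∑' n : ℕ, f (n + 1) * x ^ (n + 1) / (Nat.factorial (n + 1) : ℝ)
      ≤ 1 + ∑' n : ℕ, (∏ i, a i / b i) * (x ^ (n + 1) / (Nat.factorial (n + 1) : ℝ)) := by
        linarith
    _ = 1 + (∏ i, a i / b i) * (Real.exp x - 1) := by
        rw [tsum_mul_left, hexp_tail]
    _ = 1 - (∏ i, a i / b i) + (∏ i, a i / b i) * Real.exp x := by ring
end

section
/- Let q ≥ 1 and let a_1,…,a_q, b_1,…,b_q be positive reals satisfying the chain of inequalities e_q(b)/e_q(a) ≥ e_{q-1}(b)/e_{q-1}(a) ≥ ⋯ ≥ e_1(b)/e_1(a) ≥ 1, where e_k denotes the k-th elementary symmetric polynomial. Then for all x ≥ 0, qFq(a;b;x) ≥ e^{f_1 x}, where f_1 = ∏_{i=1}^q a_i/b_i. -/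
/-!
Write `f_n = ∏_{k<n} R(k)` with `R(t) = ∏ᵢ (aᵢ + t)/(bᵢ + t)`. Expanding both products in
elementary symmetric polynomials, `R(t) ≥ R(0) = f₁` for `t ≥ 0` reduces coefficientwise to
`e_k(b)/e_k(a) ≤ e_q(b)/e_q(a)`, which is the chain hypothesis. Hence `f_n ≥ f₁ⁿ`, and comparing
the series termwise with that of `exp (f₁ x)` gives the claim; summability comes from the bound
`R(t) ≤ ∏ᵢ max 1 (aᵢ/bᵢ)`.
-/

open Finset Real MeasureTheory

theorem exp_mul_le_tsum_of_pow_le {f : ℕ → ℝ} {c M x : ℝ} (hc : 0 ≤ c) (hx : 0 ≤ x)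
    (hlow : ∀ n, c ^ n ≤ f n) (hup : ∀ n, f n ≤ M ^ n) :
    exp (c * x) ≤ ∑' n : ℕ, f n * x ^ n / (Nat.factorial n) := by
  have hsum : Summable fun n : ℕ => f n * x ^ n / (Nat.factorial n) :=
    (summable_pow_div_factorial (M * x)).of_nonneg_of_le
      (fun n => by have := (pow_nonneg hc n).trans (hlow n); positivity)
      (fun n => by rw [mul_pow]; gcongr; exact hup n)
  rw [exp_eq_exp_ℝ, NormedSpace.exp_eq_tsum_div]
  refine (summable_pow_div_factorial (c * x)).tsum_le_tsum (fun n => ?_) hsum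
  rw [mul_pow]
  gcongr
  exact hlow n

section Esym

variable {q : ℕ}

theorem esym_pos {a : Fin q → ℝ} (ha : ∀ i, 0 < a i) {k : ℕ} (hk : k ≤ q) : 0 < esym k a :=
  sum_pos (fun _ _ => prod_pos fun i _ => ha i) (powersetCard_nonempty.2 (by simpa using hk))

theorem esym_self (a : Fin q → ℝ) : esym q a = ∏ i, a i := by
  have hsingle : powersetCard q (univ : Finset (Fin q)) = {univ} := by
    simpa using powersetCard_self (univ : Finset (Fin q))
  rw [esym, hsingle, sum_singleton]

theorem prod_add_eq_sum_esym_mul_pow (a : Fin q → ℝ) (t : ℝ) :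
    ∏ i, (a i + t) = ∑ k ∈ range (q + 1), esym k a * t ^ (q - k) := by
  rw [prod_add, sum_powerset, card_univ, Fintype.card_fin]
  refine sum_congr rfl fun k _ => ?_
  rw [esym, sum_mul]
  refine sum_congr rfl fun s hs => ?_
  rw [mem_powersetCard] at hs
  rw [prod_const, card_sdiff_of_subset hs.1, hs.2, card_univ, Fintype.card_fin]

theorem esym_mul_esym_self_le {a b : Fin q → ℝ} (ha : ∀ i, 0 < a i)
    (hchain : ∀ i : ℕ, i < q → esym i b / esym i a ≤ esym (i + 1) b / esym (i + 1) a)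
    {k : ℕ} (hk : k ≤ q) : esym k b * esym q a ≤ esym k a * esym q b := by
  have hmono : MonotoneOn (fun i => esym i b / esym i a) (Set.Iic q) :=
    monotoneOn_of_le_add_one Set.ordConnected_Iic
      fun i _ _ hi => hchain i (Nat.add_one_le_iff.1 hi)
  have := hmono (Set.mem_Iic.2 hk) Set.self_mem_Iic hk
  rwa [div_le_div_iff₀ (esym_pos ha hk) (esym_pos ha le_rfl), mul_comm (esym q b)] at this

theorem prod_div_le_prod_add_div_prod_add {a b : Fin q → ℝ} (hb : ∀ i, 0 < b i)
    (hkey : ∀ k ≤ q, esym k b * esym q a ≤ esym k a * esym q b) {t : ℝ} (ht : 0 ≤ t) :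
    ∏ i, a i / b i ≤ (∏ i, (a i + t)) / ∏ i, (b i + t) := by
  rw [prod_div_distrib, div_le_div_iff₀ (prod_pos fun i _ => hb i)
    (prod_pos fun i _ => by have := hb i; positivity), mul_comm (∏ i, (a i + t)),
    prod_add_eq_sum_esym_mul_pow a, prod_add_eq_sum_esym_mul_pow b, mul_sum, mul_sum,
    ← esym_self a, ← esym_self b]
  refine sum_le_sum fun k hk => ?_
  have := hkey k (Nat.lt_add_one_iff.1 (mem_range.1 hk))
  calc esym q a * (esym k b * t ^ (q - k)) = esym k b * esym q a * t ^ (q - k) := by ring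
    _ ≤ esym k a * esym q b * t ^ (q - k) := by gcongr
    _ = esym q b * (esym k a * t ^ (q - k)) := by ring

end Esym

theorem add_div_add_le_max_one_div {a b t : ℝ} (hb : 0 < b) (ht : 0 ≤ t) :
    (a + t) / (b + t) ≤ max 1 (a / b) := by
  rw [div_le_iff₀ (by positivity)]
  rcases le_total a b with h | h
  · nlinarith [le_max_left 1 (a / b)]
  · have h1 : 1 ≤ a / b := (one_le_div hb).2 h
    rw [max_eq_right h1, mul_add, div_mul_cancel₀ _ hb.ne']
    nlinarith

section Rising

variable {ι : Type*} [Fintype ι] {a b : ι → ℝ}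

theorem prod_rise_div_prod_rise (n : ℕ) :
    (∏ i, rise (a i) n) / ∏ i, rise (b i) n
      = ∏ k ∈ range n, (∏ i, (a i + k)) / ∏ i, (b i + k) := by
  simp only [rise, ← prod_div_distrib]
  exact prod_comm

theorem prod_add_div_prod_add_le (ha : ∀ i, 0 < a i) (hb : ∀ i, 0 < b i) {t : ℝ} (ht : 0 ≤ t) :
    (∏ i, (a i + t)) / ∏ i, (b i + t) ≤ ∏ i, max 1 (a i / b i) := by
  rw [← prod_div_distrib]
  exact prod_le_prod (fun i _ => by have := ha i; have := hb i; positivity)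
    fun i _ => add_div_add_le_max_one_div (hb i) ht

theorem pow_le_prod_rise_div_prod_rise {c : ℝ} (hc : 0 ≤ c)
    (hR : ∀ k : ℕ, c ≤ (∏ i, (a i + k)) / ∏ i, (b i + k)) (n : ℕ) :
    c ^ n ≤ (∏ i, rise (a i) n) / ∏ i, rise (b i) n := by
  rw [prod_rise_div_prod_rise]
  simpa using prod_le_prod (s := range n) (fun _ _ => hc) fun k _ => hR k

theorem prod_rise_div_prod_rise_le_pow (ha : ∀ i, 0 < a i) (hb : ∀ i, 0 < b i) (n : ℕ) :
    (∏ i, rise (a i) n) / ∏ i, rise (b i) n ≤ (∏ i, max 1 (a i / b i)) ^ n := by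
  rw [prod_rise_div_prod_rise]
  simpa using prod_le_prod (s := range n)
    (fun k _ => div_nonneg (prod_nonneg fun i _ => by have := ha i; positivity)
      (prod_nonneg fun i _ => by have := hb i; positivity))
    fun k _ => prod_add_div_prod_add_le ha hb (Nat.cast_nonneg k)

end Rising

theorem stmt2_general (q : ℕ) (a b : Fin q → ℝ)
    (ha : ∀ i, 0 < a i) (hb : ∀ i, 0 < b i)
    (hchain : ∀ i : ℕ, i < q → esym i b / esym i a ≤ esym (i + 1) b / esym (i + 1) a)
    (x : ℝ) (hx : 0 ≤ x) :
    Real.exp ((∏ i, a i / b i) * x)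
      ≤ ∑' n : ℕ, (∏ i, rise (a i) n) / (∏ i, rise (b i) n) * x ^ n / (Nat.factorial n) := by
  have hc : 0 ≤ ∏ i, a i / b i := prod_nonneg fun i _ => (div_pos (ha i) (hb i)).le
  have hR : ∀ k : ℕ, ∏ i, a i / b i ≤ (∏ i, (a i + k)) / ∏ i, (b i + k) := fun k =>
    prod_div_le_prod_add_div_prod_add hb (fun _ hk => esym_mul_esym_self_le ha hchain hk)
      (Nat.cast_nonneg k)
  exact exp_mul_le_tsum_of_pow_le hc hx (pow_le_prod_rise_div_prod_rise hc hR)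
    (prod_rise_div_prod_rise_le_pow ha hb)

theorem stmt2 (q : ℕ) (hq : 1 ≤ q) (a b : Fin q → ℝ)
    (ha : ∀ i, 0 < a i) (hb : ∀ i, 0 < b i)
    (hchain : ∀ i : ℕ, i < q → esym i b / esym i a ≤ esym (i + 1) b / esym (i + 1) a)
    (x : ℝ) (hx : 0 ≤ x) :
    Real.exp ((∏ i, a i / b i) * x)
      ≤ ∑' n : ℕ, (∏ i, rise (a i) n) / (∏ i, rise (b i) n) * x ^ n / (Nat.factorial n) :=
  stmt2_general q a b ha hb hchain x hx
end

section
/- Let p < q and let a_1,…,a_p, b_1,…,b_q be positive reals such that e_{q-i}(b_1,…,b_q) ≥ e_{p-i}(a_1,…,a_p) for i = 0,1,…,p. Then for all x ≥ 0, pFq(a;b;x) ≤ 1 − f_1 + f_1 e^x, where f_1 = (∏_{i=1}^p a_i)/(∏_{i=1}^q b_i). -/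
open Finset Real MeasureTheory

lemma prod_add_eq {p : ℕ} (a : Fin p → ℝ) (x : ℝ) :
    ∏ i, (a i + x) = ∑ i ∈ Finset.range (p+1), esym (p - i) a * x ^ i := by
  have h := congrArg (Polynomial.eval x)
    (Multiset.prod_X_add_C_eq_sum_esymm (Multiset.map a Finset.univ.val))
  simp only [Multiset.card_map, Finset.card_univ, Fintype.card_fin,
    Polynomial.eval_multiset_prod, Multiset.map_map, Function.comp,
    Polynomial.eval_add, Polynomial.eval_X, Polynomial.eval_C,
    Polynomial.eval_finset_sum, Polynomial.eval_mul, Polynomial.eval_pow] at h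
  rw [← Finset.sum_range_reflect]
  rw [show (∏ i, (a i + x)) = (Multiset.map (fun i => a i + x) Finset.univ.val).prod from
    (Finset.prod_eq_multiset_prod _ _)] at *
  rw [show (Multiset.map (fun i => x + a i) Finset.univ.val) = Multiset.map (fun i => a i + x) Finset.univ.val by
    simp [add_comm]] at h
  have hc : Multiset.card (Finset.univ : Finset (Fin p)).val = p := by
    rw [← Finset.card_def]; simp
  rw [hc] at h
  rw [h]
  apply Finset.sum_congr rfl
  intro i hi
  simp only [Finset.mem_range] at hi
  have hip : i ≤ p := Nat.lt_succ_iff.mp hi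
  rw [Nat.succ_sub_one, Nat.sub_sub_self hip, Finset.esymm_map_val]
  rfl

lemma esym_nonneg {q : ℕ} (k : ℕ) (b : Fin q → ℝ) (hb : ∀ i, 0 < b i) : 0 ≤ esym k b := by
  apply Finset.sum_nonneg
  intro s _
  exact Finset.prod_nonneg fun i _ => (hb i).le

theorem stmt5 (p q : ℕ) (hpq : p < q) (a : Fin p → ℝ) (b : Fin q → ℝ)
    (ha : ∀ i, 0 < a i) (hb : ∀ i, 0 < b i)
    (he : ∀ i : ℕ, i ≤ p → esym (p - i) a ≤ esym (q - i) b)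
    (x : ℝ) (hx : 0 ≤ x) :
    (∑' n : ℕ, (∏ i, rise (a i) n) / (∏ i, rise (b i) n) * x ^ n / (Nat.factorial n))
      ≤ 1 - (∏ i, a i) / (∏ i, b i) + (∏ i, a i) / (∏ i, b i) * Real.exp x := by
  -- basic positivity
  have hbpos : ∀ n : ℕ, 0 < ∏ i, rise (b i) n := by
    intro n
    apply Finset.prod_pos
    intro i _
    exact Finset.prod_pos fun k _ => add_pos_of_pos_of_nonneg (hb i) (Nat.cast_nonneg k)
  have hapos : ∀ n : ℕ, 0 < ∏ i, rise (a i) n := by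
    intro n
    apply Finset.prod_pos
    intro i _
    exact Finset.prod_pos fun k _ => add_pos_of_pos_of_nonneg (ha i) (Nat.cast_nonneg k)
  set F : ℕ → ℝ := fun n => (∏ i, rise (a i) n) / (∏ i, rise (b i) n) with hF
  have hFpos : ∀ n, 0 < F n := fun n => div_pos (hapos n) (hbpos n)
  -- key polynomial inequality
  have hkey : ∀ y : ℝ, 0 ≤ y → ∏ i, (a i + y) ≤ ∏ i, (b i + y) := by
    intro y hy
    rw [prod_add_eq, prod_add_eq]
    calc ∑ i ∈ Finset.range (p+1), esym (p - i) a * y ^ i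
        ≤ ∑ i ∈ Finset.range (p+1), esym (q - i) b * y ^ i := by
          apply Finset.sum_le_sum
          intro i hi
          exact mul_le_mul_of_nonneg_right (he i (Nat.lt_succ_iff.mp (Finset.mem_range.mp hi)))
            (pow_nonneg hy i)
      _ ≤ ∑ i ∈ Finset.range (q+1), esym (q - i) b * y ^ i := by
          apply Finset.sum_le_sum_of_subset_of_nonneg
          · exact Finset.range_subset_range.mpr (by omega)
          · intro i _ _
            exact mul_nonneg (esym_nonneg _ _ hb) (pow_nonneg hy i)
  -- F decreasing
  have hFstep : ∀ n : ℕ, F (n+1) ≤ F n := by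
    intro n
    have hra : (∏ i, rise (a i) (n+1)) = (∏ i, rise (a i) n) * ∏ i, (a i + n) := by
      rw [← Finset.prod_mul_distrib]
      exact Finset.prod_congr rfl fun i _ => Finset.prod_range_succ _ _
    have hrb : (∏ i, rise (b i) (n+1)) = (∏ i, rise (b i) n) * ∏ i, (b i + n) := by
      rw [← Finset.prod_mul_distrib]
      exact Finset.prod_congr rfl fun i _ => Finset.prod_range_succ _ _
    have hbn : (0:ℝ) < ∏ i, (b i + n) :=
      Finset.prod_pos fun i _ => add_pos_of_pos_of_nonneg (hb i) (Nat.cast_nonneg n)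
    have han : (0:ℝ) ≤ ∏ i, (a i + n) :=
      Finset.prod_nonneg fun i _ => (add_pos_of_pos_of_nonneg (ha i) (Nat.cast_nonneg n)).le
    simp only [hF, hra, hrb]
    rw [div_le_div_iff₀ (mul_pos (hbpos n) hbn) (hbpos n)]
    calc (∏ i, rise (a i) n) * (∏ i, (a i + n)) * (∏ i, rise (b i) n)
        ≤ (∏ i, rise (a i) n) * (∏ i, (b i + n)) * (∏ i, rise (b i) n) := by
          apply mul_le_mul_of_nonneg_right _ (hbpos n).le
          exact mul_le_mul_of_nonneg_left (hkey n (Nat.cast_nonneg n)) (hapos n).le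
      _ = (∏ i, rise (a i) n) * ((∏ i, rise (b i) n) * (∏ i, (b i + n))) := by ring
  have hF0 : F 0 = 1 := by simp [hF, rise]
  have hF1 : F 1 = (∏ i, a i) / (∏ i, b i) := by
    simp [hF, rise, Finset.prod_range_one]
  have hFle1 : ∀ n, F n ≤ 1 := by
    intro n
    induction n with
    | zero => exact hF0.le
    | succ k ih => exact (hFstep k).trans ih
  have hFleF1 : ∀ n, F (n+1) ≤ F 1 := by
    intro n
    induction n with
    | zero => exact le_refl _
    | succ k ih => exact (hFstep (k+1)).trans ih
  show (∑' n : ℕ, F n * x ^ n / (Nat.factorial n : ℝ)) ≤ _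
  -- summability
  have hexp : Summable (fun n : ℕ => x ^ n / (Nat.factorial n : ℝ)) :=
    Real.summable_pow_div_factorial x
  have hterm_nonneg : ∀ n : ℕ, 0 ≤ F n * x ^ n / (Nat.factorial n : ℝ) := by
    intro n
    exact div_nonneg (mul_nonneg (hFpos n).le (pow_nonneg hx n)) (Nat.cast_nonneg _)
  have hsum : Summable (fun n : ℕ => F n * x ^ n / (Nat.factorial n : ℝ)) := by
    apply Summable.of_nonneg_of_le hterm_nonneg _ hexp
    intro n
    rw [div_le_div_iff_of_pos_right (by positivity : (0:ℝ) < (Nat.factorial n : ℝ))]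
    calc F n * x ^ n ≤ 1 * x ^ n :=
      mul_le_mul_of_nonneg_right (hFle1 n) (pow_nonneg hx n)
      _ = x ^ n := one_mul _
  have hsum1 : Summable (fun n : ℕ => F (n+1) * x ^ (n+1) / (Nat.factorial (n+1) : ℝ)) :=
    hsum.comp_injective (add_left_injective 1)
  have hexp1 : Summable (fun n : ℕ => x ^ (n+1) / (Nat.factorial (n+1) : ℝ)) :=
    hexp.comp_injective (add_left_injective 1)
  have hexpeq : Real.exp x = ∑' n : ℕ, x ^ n / (Nat.factorial n : ℝ) := by
    rw [Real.exp_eq_exp_ℝ]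
    exact congrFun NormedSpace.exp_eq_tsum_div x
  -- split off n = 0
  rw [Summable.tsum_eq_zero_add hsum]
  have h0 : F 0 * x ^ 0 / (Nat.factorial 0 : ℝ) = 1 := by simp [hF0]
  have htail : (∑' n : ℕ, F (n+1) * x ^ (n+1) / (Nat.factorial (n+1) : ℝ))
      ≤ F 1 * (Real.exp x - 1) := by
    have h1 : (∑' n : ℕ, F (n+1) * x ^ (n+1) / (Nat.factorial (n+1) : ℝ))
        ≤ ∑' n : ℕ, F 1 * (x ^ (n+1) / (Nat.factorial (n+1) : ℝ)) := by
      apply Summable.tsum_le_tsum _ hsum1 (hexp1.mul_left _)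
      intro n
      rw [mul_div_assoc]
      apply mul_le_mul_of_nonneg_right (hFleF1 n) (by positivity)
    have h2 : (∑' n : ℕ, F 1 * (x ^ (n+1) / (Nat.factorial (n+1) : ℝ)))
        = F 1 * (Real.exp x - 1) := by
      rw [tsum_mul_left]
      congr 1
      have := Summable.tsum_eq_zero_add hexp
      rw [hexpeq, this]
      simp
    rw [h2] at h1
    exact h1
  calc F 0 * x ^ 0 / (Nat.factorial 0 : ℝ)
        + ∑' n : ℕ, F (n+1) * x ^ (n+1) / (Nat.factorial (n+1) : ℝ)
      ≤ 1 + F 1 * (Real.exp x - 1) := by rw [h0]; linarith [htail]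
    _ = 1 - (∏ i, a i) / (∏ i, b i) + (∏ i, a i) / (∏ i, b i) * Real.exp x := by
      rw [hF1]; ring
end

section
/- Let a_1, a_2, b_1, b_2 be reals. Then v(t) = t^{a_1} + t^{a_2} − t^{b_1} − t^{b_2} ≥ 0 for all t ∈ (0,1] if and only if min(a_1,a_2) ≤ min(b_1,b_2) and a_1 + a_2 ≤ b_1 + b_2. -/
/-!
For fixed `t ∈ (0, 1]` the map `a ↦ t ^ a` is convex and antitone, and for such maps the
condition on the exponents is exactly weak majorization, so sufficiency is Tomić's inequality
for two points. Conversely, comparing the dominant terms as `t → 0` forces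
`min a₁ a₂ ≤ min b₁ b₂`, and since `v(1) = 0` is a minimum of `v` on `(0, 1]` its derivative
`a₁ + a₂ - b₁ - b₂` at `1` is nonpositive.
-/

open Set

theorem ConvexOn.map_add_map_le_of_add_eq {s : Set ℝ} {f : ℝ → ℝ} (hf : ConvexOn ℝ s f)
    {x y u v : ℝ} (hx : x ∈ s) (hy : y ∈ s) (hxu : x ≤ u) (huy : u ≤ y) (huv : u + v = x + y) :
    f u + f v ≤ f x + f y := by
  rcases hxu.trans huy |>.eq_or_lt with rfl | hxy
  · obtain rfl : u = x := le_antisymm huy hxu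
    obtain rfl : v = u := by linarith
    rfl
  -- `u` and `v` are the convex combinations of `x` and `y` with swapped weights
  set w := (u - x) / (y - x)
  have hw₀ : 0 ≤ w := div_nonneg (by linarith) (by linarith)
  have hw₁ : w ≤ 1 := (div_le_one (by linarith)).2 (by linarith)
  have hu : (1 - w) * x + w * y = u := by simp only [w]; field_simp; ring
  have hv : w * x + (1 - w) * y = v := by
    rw [show v = x + y - u by linarith]; simp only [w]; field_simp; ring
  have hfu := hf.2 hx hy (sub_nonneg.2 hw₁) hw₀ (sub_add_cancel 1 w)
  have hfv := hf.2 hx hy hw₀ (sub_nonneg.2 hw₁) (add_sub_cancel w 1)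
  simp only [smul_eq_mul, hu, hv] at hfu hfv
  linarith

theorem ConvexOn.map_add_map_le_of_min_le_of_add_le {f : ℝ → ℝ} (hf : ConvexOn ℝ univ f)
    (hf' : Antitone f) {x₁ x₂ y₁ y₂ : ℝ} (hmin : min x₁ x₂ ≤ min y₁ y₂)
    (hsum : x₁ + x₂ ≤ y₁ + y₂) : f y₁ + f y₂ ≤ f x₁ + f x₂ := by
  wlog hx : x₁ ≤ x₂ generalizing x₁ x₂
  · rw [add_comm (f x₁)]
    exact this (min_comm x₁ x₂ ▸ hmin) (add_comm x₁ x₂ ▸ hsum) (le_of_not_ge hx)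
  wlog hy : y₁ ≤ y₂ generalizing y₁ y₂
  · rw [add_comm (f y₁)]
    exact this (min_comm y₁ y₂ ▸ hmin) (add_comm y₁ y₂ ▸ hsum) (le_of_not_ge hy)
  rw [min_eq_left hx, min_eq_left hy] at hmin
  rcases le_or_gt x₂ y₂ with h₂ | h₂
  · exact add_le_add (hf' hmin) (hf' h₂)
  · calc f y₁ + f y₂ ≤ f y₁ + f (x₁ + x₂ - y₁) := by gcongr; exact hf' (by linarith)
      _ ≤ f x₁ + f x₂ :=
        hf.map_add_map_le_of_add_eq (mem_univ _) (mem_univ _) hmin (by linarith) (by ring)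

theorem IsLocalMinOn.hasDerivWithinAt_Iic_nonpos {f : ℝ → ℝ} {f' a : ℝ}
    (h : IsLocalMinOn f (Iic a) a) (hf : HasDerivWithinAt f f' (Iic a) a) : f' ≤ 0 := by
  have hcone : (-1 : ℝ) ∈ posTangentConeAt (Iic a) a :=
    mem_posTangentConeAt_of_segment_subset <| by
      rw [segment_symm, segment_eq_Icc (by linarith)]
      exact Icc_subset_Iic_self
  simpa using h.hasFDerivWithinAt_nonneg hf.hasFDerivWithinAt hcone

theorem Real.hasDerivAt_rpow_const_one (p : ℝ) : HasDerivAt (fun t : ℝ => t ^ p) p 1 := by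
  simpa using Real.hasDerivAt_rpow_const (x := 1) (p := p) (Or.inl one_ne_zero)

section RpowExponents

variable {a₁ a₂ b₁ b₂ : ℝ}

theorem rpow_add_rpow_le_of_min_le_of_add_le (hmin : min a₁ a₂ ≤ min b₁ b₂)
    (hsum : a₁ + a₂ ≤ b₁ + b₂) {t : ℝ} (ht : t ∈ Ioc 0 1) :
    t ^ b₁ + t ^ b₂ ≤ t ^ a₁ + t ^ a₂ :=
  (convexOn_rpow_left ht.1).map_add_map_le_of_min_le_of_add_le
    (Real.antitone_rpow_of_base_le_one ht.1 ht.2) hmin hsum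

variable (h : ∀ t ∈ Ioc (0 : ℝ) 1, t ^ b₁ + t ^ b₂ ≤ t ^ a₁ + t ^ a₂)
include h

theorem min_le_min_of_rpow_add_rpow_le : min a₁ a₂ ≤ min b₁ b₂ := by
  by_contra! hlt
  set ε := min a₁ a₂ - min b₁ b₂
  have hε : 0 < ε := sub_pos.2 hlt
  -- at this `t` the `a`-terms add up to at most half the dominant `b`-term
  set t : ℝ := (1 / 4) ^ ε⁻¹
  have ht0 : 0 < t := by positivity
  have ht1 : t ≤ 1 := Real.rpow_le_one (by norm_num) (by norm_num) (inv_nonneg.2 hε.le)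
  have htε : t ^ ε = 1 / 4 := by
    rw [← Real.rpow_mul (by norm_num), inv_mul_cancel₀ hε.ne', Real.rpow_one]
  have hanti := Real.antitone_rpow_of_base_le_one ht0 ht1
  have hA : t ^ a₁ + t ^ a₂ ≤ 2 * t ^ min a₁ a₂ := by
    linarith [hanti (min_le_left a₁ a₂), hanti (min_le_right a₁ a₂)]
  have hB : t ^ min b₁ b₂ ≤ t ^ b₁ + t ^ b₂ := by
    rw [hanti.map_min]
    exact max_le (by linarith [Real.rpow_pos_of_pos ht0 b₂])
      (by linarith [Real.rpow_pos_of_pos ht0 b₁])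
  have hmin : t ^ min a₁ a₂ = t ^ min b₁ b₂ / 4 := by
    rw [show min a₁ a₂ = min b₁ b₂ + ε by ring, Real.rpow_add ht0, htε]
    ring
  linarith [h t ⟨ht0, ht1⟩, Real.rpow_pos_of_pos ht0 (min b₁ b₂)]

theorem add_le_add_of_rpow_add_rpow_le : a₁ + a₂ ≤ b₁ + b₂ := by
  set v : ℝ → ℝ := fun t => t ^ a₁ + t ^ a₂ - (t ^ b₁ + t ^ b₂)
  have hv : HasDerivAt v (a₁ + a₂ - (b₁ + b₂)) 1 :=
    ((Real.hasDerivAt_rpow_const_one a₁).add (Real.hasDerivAt_rpow_const_one a₂)).sub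
      ((Real.hasDerivAt_rpow_const_one b₁).add (Real.hasDerivAt_rpow_const_one b₂))
  have hmin : IsLocalMinOn v (Iic 1) 1 := by
    filter_upwards [nhdsWithin_le_nhds (Ioi_mem_nhds one_pos), self_mem_nhdsWithin]
      with t ht0 ht1
    simpa [v] using h t ⟨ht0, ht1⟩
  linarith [hmin.hasDerivWithinAt_Iic_nonpos hv.hasDerivWithinAt]

end RpowExponents

theorem stmt15 (a₁ a₂ b₁ b₂ : ℝ) :
    (∀ t ∈ Set.Ioc (0:ℝ) 1, 0 ≤ t ^ a₁ + t ^ a₂ - t ^ b₁ - t ^ b₂) ↔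
      (min a₁ a₂ ≤ min b₁ b₂ ∧ a₁ + a₂ ≤ b₁ + b₂) := by
  simp_rw [sub_sub, sub_nonneg]
  exact ⟨fun h => ⟨min_le_min_of_rpow_add_rpow_le h, add_le_add_of_rpow_add_rpow_le h⟩,
    fun ⟨hmin, hsum⟩ _ ht => rpow_add_rpow_le_of_min_le_of_add_le hmin hsum ht⟩
end

section
/- Let a_1,…,a_q, b_1,…,b_q be reals with 0 < a_1 ≤ ⋯ ≤ a_q, 0 < b_1 ≤ ⋯ ≤ b_q and ∑_{i=1}^k a_i ≤ ∑_{i=1}^k b_i for k = 1,…,q (i.e., b weakly supermajorizes a). Then ∑_{j=1}^q (t^{a_j} − t^{b_j}) ≥ 0 for all t ∈ (0,1]. -/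
/-!
For fixed `t ∈ (0, 1]` the map `s ↦ t ^ s` is convex with derivative `log t * t ^ s ≤ 0`, so its
tangent line at `b j` gives `t ^ a j - t ^ b j ≥ c j * (a j - b j)` with `c j = log t * t ^ b j`.
The weights `c j` are nonpositive and nondecreasing in `j` because `b` is, while the prefix sums
of `a - b` are nonpositive; Abel summation then makes `∑ c j * (a j - b j)` nonnegative.
-/
open Finset

theorem Fin.sum_filter_val_lt_castSucc {M : Type*} [AddCommMonoid M] {n k : ℕ} (hk : k ≤ n)
    (f : Fin (n + 1) → M) :
    ∑ i ∈ univ.filter (fun i : Fin n => (i : ℕ) < k), f i.castSucc =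
      ∑ i ∈ univ.filter (fun i : Fin (n + 1) => (i : ℕ) < k), f i := by
  simp [sum_filter, Fin.sum_univ_castSucc, not_lt.mpr hk]

theorem Fin.sum_mul_nonneg_of_monotone_of_prefix_sum_nonpos {R : Type*} [CommRing R]
    [LinearOrder R] [IsStrictOrderedRing R] :
    ∀ {n : ℕ} {c d : Fin n → R}, Monotone c → (∀ i, c i ≤ 0) →
      (∀ k ≤ n, ∑ i ∈ univ.filter (fun i : Fin n => (i : ℕ) < k), d i ≤ 0) →
        0 ≤ ∑ i, c i * d i
  | 0, _, _, _, _, _ => by simp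
  | n + 1, c, d, hc, hc0, hd => by
    have hsplit : ∑ i, c i * d i
        = ∑ i : Fin n, (c i.castSucc - c (last n)) * d i.castSucc + c (last n) * ∑ i, d i := by
      simp only [Fin.sum_univ_castSucc, sub_mul, sum_sub_distrib, mul_add, mul_sum]
      ring
    have hhead : 0 ≤ ∑ i : Fin n, (c i.castSucc - c (last n)) * d i.castSucc :=
      Fin.sum_mul_nonneg_of_monotone_of_prefix_sum_nonpos
        (fun i j hij => sub_le_sub_right (hc (Fin.castSucc_le_castSucc_iff.mpr hij)) _)
        (fun i => sub_nonpos.mpr (hc (Fin.le_last _)))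
        (fun k hk => (Fin.sum_filter_val_lt_castSucc hk d).trans_le (hd k (hk.trans n.le_succ)))
    have htotal : ∑ i, d i ≤ 0 := by
      simpa only [filter_true_of_mem fun (i : Fin (n + 1)) _ => i.is_lt] using hd (n + 1) le_rfl
    rw [hsplit]
    exact add_nonneg hhead (mul_nonneg_of_nonpos_of_nonpos (hc0 _) htotal)

theorem Real.log_mul_rpow_mul_sub_le_rpow_sub_rpow {t : ℝ} (ht : 0 < t) (x y : ℝ) :
    Real.log t * t ^ y * (x - y) ≤ t ^ x - t ^ y :=
  calc Real.log t * t ^ y * (x - y) = t ^ y * (Real.log t * (x - y) + 1) - t ^ y := by ring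
    _ ≤ t ^ y * t ^ (x - y) - t ^ y := by
      gcongr
      rw [Real.rpow_def_of_pos ht]
      exact Real.add_one_le_exp _
    _ = t ^ x - t ^ y := by rw [← Real.rpow_add ht, add_sub_cancel]

theorem stmt16_general (q : ℕ) (a b : Fin q → ℝ)
    (hbmono : Monotone b)
    (hsum : ∀ k : ℕ, k ≤ q →
      (∑ i ∈ Finset.univ.filter (fun i : Fin q => (i : ℕ) < k), a i) ≤
        ∑ i ∈ Finset.univ.filter (fun i : Fin q => (i : ℕ) < k), b i) :
    ∀ t ∈ Set.Ioc (0:ℝ) 1, 0 ≤ ∑ j, (t ^ a j - t ^ b j) := by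
  rintro t ⟨ht0, ht1⟩
  have hlog : Real.log t ≤ 0 := Real.log_nonpos ht0.le ht1
  calc 0 ≤ ∑ j, Real.log t * t ^ b j * (a j - b j) := by
        refine Fin.sum_mul_nonneg_of_monotone_of_prefix_sum_nonpos ?_
          (fun j => mul_nonpos_of_nonpos_of_nonneg hlog (Real.rpow_nonneg ht0.le _))
          (fun k hk => by simpa only [sum_sub_distrib, sub_nonpos] using hsum k hk)
        exact fun i j hij =>
          mul_le_mul_of_nonpos_left (Real.rpow_le_rpow_of_exponent_ge ht0 ht1 (hbmono hij)) hlog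
    _ ≤ ∑ j, (t ^ a j - t ^ b j) :=
        sum_le_sum fun j _ => Real.log_mul_rpow_mul_sub_le_rpow_sub_rpow ht0 (a j) (b j)

theorem stmt16 (q : ℕ) (a b : Fin q → ℝ)
    (ha : ∀ i, 0 < a i) (hb : ∀ i, 0 < b i)
    (hamono : Monotone a) (hbmono : Monotone b)
    (hsum : ∀ k : ℕ, k ≤ q →
      (∑ i ∈ Finset.univ.filter (fun i : Fin q => (i : ℕ) < k), a i) ≤
        ∑ i ∈ Finset.univ.filter (fun i : Fin q => (i : ℕ) < k), b i) :
    ∀ t ∈ Set.Ioc (0:ℝ) 1, 0 ≤ ∑ j, (t ^ a j - t ^ b j) :=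
  stmt16_general q a b hbmono hsum
end
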